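/- arXiv:2502.01662 — 3 statements merged into one kernel-verified Lean document; each statement's English description precedes it below -/
import Mathlib

section
/- Let q and r be probability distributions on a finite vocabulary V. Define the rejection-resampling procedure: sample x' ~ q, accept with probability min(1, r(x')/q(x')); if rejected, resample from the normalized residual distribution norm(max(0, r - q)). Then the output token is distributed exactly according to r. -/
open Finset

theorem sub_min_eq_max_sub_zero {α : Type*} [AddCommGroup α] [LinearOrder α]
    [IsOrderedAddMonoid α] (a b : α) : b - min a b = max (b - a) 0 := by
  rw [← max_sub_sub_left, sub_self]

theorem Finset.sum_sub_min_eq_sum_max_sub_zero {ι α : Type*} [AddCommGroup α] [LinearOrder α]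
    [IsOrderedAddMonoid α] (s : Finset ι) {f g : ι → α} (h : ∑ i ∈ s, f i = ∑ i ∈ s, g i) :
    ∑ i ∈ s, (f i - min (f i) (g i)) = ∑ i ∈ s, max (g i - f i) 0 := by
  rw [sum_sub_distrib, h, ← sum_sub_distrib]
  exact sum_congr rfl fun i _ => sub_min_eq_max_sub_zero (f i) (g i)

/-- `q x' · min(1, r x' / q x')` is encoded as `min (q x') (r x')`, which stays meaningful
when `q x' = 0`. -/
theorem speculative_sampling_correct_general
    (V : Type*) [Fintype V] (q r : V → ℝ)
    (hq1 : ∑ x, q x = 1) (hr1 : ∑ x, r x = 1) :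
    ∀ x' : V,
      min (q x') (r x')
        + (∑ y, (q y - min (q y) (r y)))
            * (max (r x' - q x') 0 / ∑ y, max (r y - q y) 0)
      = r x' := by
  intro x'
  rw [sum_sub_min_eq_sum_max_sub_zero _ (hq1.trans hr1.symm), mul_div_cancel_of_imp',
    ← sub_min_eq_max_sub_zero, add_sub_cancel]
  -- an empty residual forces `r ≤ q` pointwise, where the junk value `x / 0 = 0` is harmless
  intro hres
  exact (sum_eq_zero_iff_of_nonneg fun y _ => le_max_right (r y - q y) 0).1 hres x' (mem_univ x')

/-- Rejection-resampling correctness: accept x'~q with prob min(1, r/q)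
(interpreted so that q(x')·min(1, r(x')/q(x')) = min(q(x'), r(x'))), otherwise
resample from norm(max(0, r - q)). The output distribution is exactly r. -/
theorem speculative_sampling_correct
    (V : Type*) [Fintype V] [Nonempty V] (q r : V → ℝ)
    (hq0 : ∀ x, 0 ≤ q x) (hr0 : ∀ x, 0 ≤ r x)
    (hq1 : ∑ x, q x = 1) (hr1 : ∑ x, r x = 1)
    (hden : 0 < ∑ y, max (r y - q y) 0) :
    ∀ x' : V,
      min (q x') (r x')
        + (∑ y, (q y - min (q y) (r y)))
            * (max (r x' - q x') 0 / ∑ y, max (r y - q y) 0)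
      = r x' :=
  speculative_sampling_correct_general V q r hq1 hr1
end

section
/- Under speculative decoding with acceptance rate α ∈ [0,1), proposal length γ ≥ 1, and cost coefficient c > 0 (ratio of proposal-model to target-model invocation time), the expected speed improvement factor over the vanilla two-model ensemble is (1 - α^γ)(1 + c) / ((1 - α)(1 + cγ)). -/
/-- The expected speed improvement factor of speculative decoding over the
vanilla two-model ensemble: vanilla per-token time (1+c)·T divided by
speculative per-token time (γc+1)·T / ((1-α^γ)/(1-α)). -/
theorem speculative_improvement_factor
    (γ : ℕ) (hγ : 1 ≤ γ) (α c T : ℝ)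
    (hα0 : 0 ≤ α) (hα1 : α < 1) (hc : 0 < c) (hT : 0 < T) :
    ((1 + c) * T) / (((γ : ℝ) * c + 1) * T / ((1 - α ^ γ) / (1 - α)))
      = (1 - α ^ γ) * (1 + c) / ((1 - α) * (1 + c * γ)) := by
  have h1 : (1 : ℝ) - α ≠ 0 := by linarith
  have h2 : (1 : ℝ) - α ^ γ ≠ 0 := by
    have : α ^ γ < 1 := pow_lt_one₀ hα0 hα1 (by omega)
    linarith
  have h3 : ((γ : ℝ) * c + 1) ≠ 0 := by positivity
  field_simp
  ring
end

section
/- In the alternate proposal framework with proposal length γ_q for the proposer, γ_p for the verifier, acceptance rate α ∈ [0,1), and cost coefficient c > 0, the expected speed improvement factor over the vanilla ensemble is (1 - α^{γ_q})(1 + c) / ((1 - α)(1 + cγ_q - α^{γ_p}·c)). -/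
/-- The expected speed improvement factor of the alternate proposal framework:
expected cycle time is α^{γ_p}(1 + c(γ_q - 1)) + (1 - α^{γ_p})(1 + cγ_q)
= 1 + cγ_q - α^{γ_p}c target-time units, expected tokens per cycle is
(1 - α^{γ_q})/(1-α), vanilla ensemble takes (1+c) per token. -/
theorem alternate_proposal_improvement_factor
    (γq γp : ℕ) (hγq : 1 ≤ γq) (hγp : 1 ≤ γp) (α c T : ℝ)
    (hα0 : 0 ≤ α) (hα1 : α < 1) (hc : 0 < c) (hT : 0 < T) :
    α ^ γp * (1 + c * ((γq : ℝ) - 1)) + (1 - α ^ γp) * (1 + c * γq)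
      = 1 + c * γq - α ^ γp * c ∧
    ((1 + c) * T)
        / ((α ^ γp * (1 + c * ((γq : ℝ) - 1)) + (1 - α ^ γp) * (1 + c * γq)) * T
            / ((1 - α ^ γq) / (1 - α)))
      = (1 - α ^ γq) * (1 + c) / ((1 - α) * (1 + c * γq - α ^ γp * c)) := by
  have hαq : α ^ γq < 1 := pow_lt_one₀ hα0 hα1 (by omega)
  have hαp : α ^ γp ≤ 1 := pow_le_one₀ hα0 hα1.le
  have h1 : (0:ℝ) < 1 - α := by linarith
  have h2 : (0:ℝ) < 1 - α ^ γq := by linarith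
  have hγq1 : (1:ℝ) ≤ (γq : ℝ) := by exact_mod_cast hγq
  have h3 : (0:ℝ) < 1 + c * γq - α ^ γp * c := by nlinarith
  constructor
  · ring
  · have e1 : (1:ℝ) - α ≠ 0 := h1.ne'
    have e2 : (1:ℝ) - α ^ γq ≠ 0 := h2.ne'
    have e3 : (1:ℝ) + c * γq - α ^ γp * c ≠ 0 := h3.ne'
    have eT : T ≠ 0 := hT.ne'
    rw [show α ^ γp * (1 + c * ((γq : ℝ) - 1)) + (1 - α ^ γp) * (1 + c * γq)
        = 1 + c * γq - α ^ γp * c from by ring]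
    rw [div_div_eq_mul_div, div_eq_div_iff (by positivity) (by positivity)]
    field_simp
end
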